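/- Let n ≥ 1, R > 0, and x ∈ ℝⁿ with |x| > R, and set s = 2|x|² − R² (which is positive). Let K be the symmetric n×n matrix K = s^{−1/2}·(I − (2/s)·x xᵀ), where x xᵀ is the outer product matrix. Then for every 1 ≤ m ≤ n, T_m(K) = C(n−1, m−1)·s^{−m/2}·(n/m − 2|x|²/s), where C(n−1, m−1) is the binomial coefficient. -/

import Mathlib

/-!
A principal submatrix of `c • (1 + vecMulVec u v)` is again of this form, so by the matrix
determinant lemma each `m × m` principal minor equals `c ^ m * (1 + ∑_{i ∈ t} u i * v i)`.
Summing over the `m`-subsets `t`, every index lies in `C(n-1, m-1)` of them, and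
`C(n, m) = n / m * C(n-1, m-1)`; with `u = -(2/s) • x` and `v = x` this is the formula.
-/
open Matrix

/-- The `p`-trace of a square real matrix: the sum of all `p × p` principal minors.
    `ptrace 0 S = 1`. -/
noncomputable def ptrace {ι : Type*} [Fintype ι] (p : ℕ) (S : Matrix ι ι ℝ) : ℝ := by
  classical
  exact ∑ t ∈ Finset.univ.powersetCard p,
    (S.submatrix (Subtype.val : {x // x ∈ t} → ι) Subtype.val).det

/-- The Gårding cone `K_m(n)`: real symmetric `n × n` matrices with `T_p > 0`
    for `p = 1, …, m`. -/
noncomputable def gardingCone (n m : ℕ) : Set (Matrix (Fin n) (Fin n) ℝ) :=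
  {S | S.IsSymm ∧ ∀ p, 1 ≤ p → p ≤ m → 0 < ptrace p S}

open Finset

section

variable {ι : Type*} [Fintype ι]

theorem Matrix.det_one_add_vecMulVec {R : Type*} [CommRing R] [DecidableEq ι] (u v : ι → R) :
    (1 + vecMulVec u v).det = 1 + u ⬝ᵥ v := by
  rw [vecMulVec_eq Unit, det_one_add_replicateCol_mul_replicateRow, dotProduct_comm]

theorem Finset.sum_powersetCard_sum {M : Type*} [AddCommMonoid M] {p : ℕ} (hp : 1 ≤ p)
    (f : ι → M) :
    ∑ t ∈ univ.powersetCard p, ∑ i ∈ t, f i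
      = (Fintype.card ι - 1).choose (p - 1) • ∑ i, f i := by
  classical
  rw [sum_comm' (t' := univ) (s' := fun i => (univ.powersetCard p).filter (i ∈ ·)) (by simp),
    smul_sum]
  refine sum_congr rfl fun i _ => ?_
  rw [sum_const]
  congr 1
  simpa using card_filter_powersetCard_subset {i} univ p (subset_univ _) (by simpa using hp)

theorem Nat.cast_choose_eq_div_mul_choose_sub_one {n m : ℕ} (hm : 1 ≤ m) :
    (n.choose m : ℝ) = n / m * (n - 1).choose (m - 1) := by
  obtain ⟨k, rfl⟩ : ∃ k, m = k + 1 := ⟨m - 1, by omega⟩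
  cases n with
  | zero => simp
  | succ n =>
    have h := Nat.add_one_mul_choose_eq n k
    simp only [Nat.add_sub_cancel]
    field_simp
    exact_mod_cast h.symm

-- `ptrace` is defined with classical decidability; this restates it with the ambient instance.
theorem ptrace_eq_sum_det [DecidableEq ι] (p : ℕ) (S : Matrix ι ι ℝ) :
    ptrace p S
      = ∑ t ∈ univ.powersetCard p, (S.submatrix (Subtype.val : t → ι) Subtype.val).det := by
  unfold ptrace
  congr!

theorem ptrace_smul (p : ℕ) (c : ℝ) (S : Matrix ι ι ℝ) :
    ptrace p (c • S) = c ^ p * ptrace p S := by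
  classical
  unfold ptrace
  rw [mul_sum]
  refine sum_congr rfl fun t ht => ?_
  rw [show (c • S).submatrix _ _ = c • S.submatrix _ _ from rfl, det_smul, Fintype.card_coe,
    mem_powersetCard_univ.1 ht]

theorem ptrace_one_add_vecMulVec [DecidableEq ι] {p : ℕ} (hp : 1 ≤ p) (u v : ι → ℝ) :
    ptrace p (1 + vecMulVec u v)
      = (Fintype.card ι).choose p + (Fintype.card ι - 1).choose (p - 1) * (u ⬝ᵥ v) := by
  classical
  have minor (t : Finset ι) :
      ((1 + vecMulVec u v).submatrix (Subtype.val : t → ι) Subtype.val).det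
        = 1 + ∑ i ∈ t, u i * v i := by
    have : (1 + vecMulVec u v).submatrix (Subtype.val : t → ι) Subtype.val
        = (1 + vecMulVec (fun i : t => u i) (fun i : t => v i) : Matrix t t ℝ) := by
      ext i j
      simp only [submatrix_apply, Matrix.add_apply, one_apply, vecMulVec_apply, Subtype.ext_iff]
    rw [this, det_one_add_vecMulVec, dotProduct, sum_coe_sort t (fun i => u i * v i)]
  simp_rw [ptrace_eq_sum_det, minor, sum_add_distrib, sum_const, card_powersetCard, card_univ,
    sum_powersetCard_sum hp, nsmul_eq_mul, mul_one, dotProduct]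

end

theorem ptrace_hyperboloid_curvature_matrix_general (n : ℕ) (R : ℝ) (x : Fin n → ℝ) (m : ℕ)
    (h1 : 1 ≤ m) :
    ptrace m
        ((Real.sqrt (2 * ∑ i, x i ^ 2 - R ^ 2))⁻¹ •
          ((1 : Matrix (Fin n) (Fin n) ℝ)
            - (2 / (2 * ∑ i, x i ^ 2 - R ^ 2)) • Matrix.vecMulVec x x))
      = (Nat.choose (n - 1) (m - 1) : ℝ)
          * ((Real.sqrt (2 * ∑ i, x i ^ 2 - R ^ 2))⁻¹) ^ m
          * ((n : ℝ) / m - 2 * (∑ i, x i ^ 2) / (2 * ∑ i, x i ^ 2 - R ^ 2)) := by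
  set s := 2 * ∑ i, x i ^ 2 - R ^ 2
  have hxx : x ⬝ᵥ x = ∑ i, x i ^ 2 := by simp only [dotProduct, sq]
  have rank_one : (1 : Matrix (Fin n) (Fin n) ℝ) - (2 / s) • vecMulVec x x
      = 1 + vecMulVec (-(2 / s) • x) x := by
    rw [sub_eq_add_neg, ← neg_smul, smul_vecMulVec]
  rw [rank_one, ptrace_smul, ptrace_one_add_vecMulVec h1, Fintype.card_fin,
    Nat.cast_choose_eq_div_mul_choose_sub_one h1, smul_dotProduct, hxx, smul_eq_mul]
  ring

/-- let `n ≥ 1`, `R > 0`, `x ∈ ℝⁿ` with `|x| > R`, and `s = 2|x|² − R² > 0`.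
For `K = s^{-1/2} (I − (2/s) x xᵀ)` and every `1 ≤ m ≤ n`:
`T_m(K) = C(n-1, m-1) s^{-m/2} (n/m − 2|x|²/s)`. -/
theorem ptrace_hyperboloid_curvature_matrix (n : ℕ) (hn : 1 ≤ n) (R : ℝ) (hR : 0 < R)
    (x : Fin n → ℝ) (hx : R ^ 2 < ∑ i, x i ^ 2)
    (m : ℕ) (h1 : 1 ≤ m) (h2 : m ≤ n) :
    ptrace m
        ((Real.sqrt (2 * ∑ i, x i ^ 2 - R ^ 2))⁻¹ •
          ((1 : Matrix (Fin n) (Fin n) ℝ)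
            - (2 / (2 * ∑ i, x i ^ 2 - R ^ 2)) • Matrix.vecMulVec x x))
      = (Nat.choose (n - 1) (m - 1) : ℝ)
          * ((Real.sqrt (2 * ∑ i, x i ^ 2 - R ^ 2))⁻¹) ^ m
          * ((n : ℝ) / m - 2 * (∑ i, x i ^ 2) / (2 * ∑ i, x i ^ 2 - R ^ 2)) :=
  ptrace_hyperboloid_curvature_matrix_general n R x m h1
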